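/- arXiv:1904.07194 — 10 statements merged into one kernel-verified Lean document; each statement's English description precedes it below -/
import Mathlib

section
/- Suppose the continuous linear operator L satisfies the linear forward-Euler condition: there exists h̃ > 0 such that f(u + τ • L u) ≤ f(u) for all u ∈ E and all τ with 0 ≤ τ ≤ h̃. Then f(exp(τ • L) u) ≤ f(u) for every τ ≥ 0 and every u ∈ E. -/
/-!
With `B = 1 + h̃ • L` and `λ = τ / h̃` we have `τ • L = λ • (B - 1)`, so
`exp (τ • L) u = ∑ₖ e^{-λ} λ^k / k! • B^k u` is a Poisson-weighted average of the forward-Euler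
iterates `B^k u`. Each iterate lies in the sublevel set `{v | f v ≤ f u}`, which is convex and
closed, hence contains this infinite convex combination.
-/

open NormedSpace Filter Topology
open scoped Nat

theorem Convex.hasSum_mem_of_isClosed {ι E : Type*} [AddCommGroup E] [Module ℝ E]
    [TopologicalSpace E] [ContinuousAdd E] [ContinuousSMul ℝ E] {s : Set E}
    (hs : Convex ℝ s) (hs_closed : IsClosed s) {w : ι → ℝ} {x : ι → E} {y : E}
    (hw₀ : ∀ i, 0 ≤ w i) (hw₁ : HasSum w 1) (hx : ∀ i, x i ∈ s)
    (hy : HasSum (fun i => w i • x i) y) : y ∈ s := by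
  have hpos : ∀ᶠ t in atTop, 0 < ∑ i ∈ t, w i := hw₁.eventually (lt_mem_nhds zero_lt_one)
  have hlim : Tendsto (fun t : Finset ι => t.centerMass w x) atTop (𝓝 y) := by
    simpa [Finset.centerMass] using (hw₁.inv₀ one_ne_zero).smul hy
  exact hs_closed.mem_of_tendsto hlim <|
    hpos.mono fun t ht => hs.centerMass_mem (fun i _ => hw₀ i) ht fun i _ => hx i

theorem NormedSpace.hasSum_poisson_smul_pow {𝔸 : Type*} [NormedRing 𝔸] [NormedAlgebra ℝ 𝔸]
    [CompleteSpace 𝔸] (x : 𝔸) (r : ℝ) :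
    HasSum (fun k : ℕ => (Real.exp (-r) * r ^ k / k !) • x ^ k) (exp (r • (x - 1))) := by
  let : NormedAlgebra ℚ 𝔸 := .restrictScalars ℚ ℝ 𝔸
  have hsplit : r • (x - 1) = algebraMap ℝ 𝔸 (-r) + r • x := by
    rw [Algebra.algebraMap_eq_smul_one, smul_sub, neg_smul]
    abel
  have hexp : exp (r • (x - 1)) = Real.exp (-r) • exp (r • x) := by
    rw [hsplit, exp_add_of_commute (Algebra.commutes _ _), ← algebraMap_exp_comm,
      ← Real.exp_eq_exp_ℝ, ← Algebra.smul_def]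
  rw [hexp]
  convert (exp_series_hasSum_exp' (𝕂 := ℝ) (r • x)).const_smul (Real.exp (-r)) using 2 with k
  rw [smul_pow, smul_smul, smul_smul, mul_div_assoc, div_eq_inv_mul, mul_assoc]

theorem Real.hasSum_poisson (r : ℝ) : HasSum (fun k : ℕ => Real.exp (-r) * r ^ k / k !) 1 := by
  simpa using NormedSpace.hasSum_poisson_smul_pow (1 : ℝ) r

/-- **SSP exponential monotonicity from the linear forward-Euler condition.**
If the continuous linear operator `L` satisfies the linear forward-Euler condition
`f (u + τ • L u) ≤ f u` for all `0 ≤ τ ≤ htilde` (for some `htilde > 0`), then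
`f (exp (τ • L) u) ≤ f u` for every `τ ≥ 0` and every `u`. -/
theorem ssp_exp_monotone_of_forwardEuler
    {E : Type*} [NormedAddCommGroup E] [NormedSpace ℝ E] [FiniteDimensional ℝ E]
    (f : E → ℝ) (hf_cont : Continuous f) (hf_conv : ConvexOn ℝ Set.univ f)
    (L : E →L[ℝ] E)
    (htilde : ℝ) (htilde_pos : 0 < htilde)
    (hFE : ∀ u : E, ∀ τ : ℝ, 0 ≤ τ → τ ≤ htilde → f (u + τ • L u) ≤ f u) :
    ∀ τ : ℝ, 0 ≤ τ → ∀ u : E, f (NormedSpace.exp (τ • L) u) ≤ f u := by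
  intro τ hτ u
  set S := {v | f v ≤ f u}
  have hS_convex : Convex ℝ S := by simpa using hf_conv.convex_le (f u)
  have hS_closed : IsClosed S := isClosed_le hf_cont continuous_const
  set B : E →L[ℝ] E := 1 + htilde • L
  have hB : Set.MapsTo B S S := fun v hv => (hFE v htilde htilde_pos.le le_rfl).trans hv
  have hBk (k : ℕ) : (B ^ k) u ∈ S := by
    rw [FunLike.coe_pow_eq_iterate]
    exact hB.iterate k (le_refl (f u))
  have hτL : τ • L = (τ / htilde) • (B - 1) := by
    rw [add_sub_cancel_left, smul_smul, div_mul_cancel₀ τ htilde_pos.ne']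
  have hexp := (hasSum_poisson_smul_pow B (τ / htilde)).mapL (ContinuousLinearMap.apply ℝ E u)
  rw [← hτL] at hexp
  exact hS_convex.hasSum_mem_of_isClosed hS_closed (fun k => by positivity)
    (Real.hasSum_poisson _) hBk hexp
end

section
/- Let s ≥ 1 and let α_{i,j} ≥ 0, β_{i,j} ≥ 0 (1 ≤ i ≤ s, 0 ≤ j ≤ i−1) satisfy Σ_{j=0}^{i−1} α_{i,j} = 1 for each i and β_{i,j} = 0 whenever α_{i,j} = 0, and let abscissas satisfy 0 = c_0 ≤ c_1 ≤ ⋯ ≤ c_s (non-decreasing). Suppose L satisfies the exponential monotonicity condition and N satisfies the forward-Euler condition with step bound h_FE > 0. Given u^n ∈ E and Δt ≥ 0 with β_{i,j} Δt ≤ α_{i,j} h_FE for all i, j (i.e. Δt ≤ C h_FE with C = min_{β_{i,j}≠0} α_{i,j}/β_{i,j}), define the integrating factor Runge–Kutta step by u^{(0)} = u^n, u^{(i)} = Σ_{j=0}^{i−1} exp((c_i − c_j) Δt • L)(α_{i,j} • u^{(j)} + (Δt β_{i,j}) • N(u^{(j)})) for i = 1, …, s, and u^{n+1} = u^{(s)}.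 Then f(u^{n+1}) ≤ f(u^n). -/
/-!
Writing `β = (β / α) α` (when `α = 0` the step-size condition forces `β = 0`), each term of an
integrating factor stage is `α i j • exp(τ L) (U j + (Δt β i j / α i j) • N (U j))` with
`τ = (c i - c j) Δt ≥ 0` because the abscissas are non-decreasing. The inner vector is a forward
Euler step of size at most `hFE`, so `f` does not increase along it nor along `exp (τ • L)`; the
stage is then a convex combination of such vectors, and convexity of `f` closes a strong
induction over the stages.
-/

open Finset

section

variable {E : Type*} [AddCommGroup E] [Module ℝ E]

def ForwardEulerCondition (f : E → ℝ) (N : E → E) (hFE : ℝ) : Prop :=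
  ∀ u : E, ∀ τ : ℝ, 0 ≤ τ → τ ≤ hFE → f (u + τ • N u) ≤ f u

theorem ConvexOn.map_sum_le_of_forall_le {ι : Type*} {s : Set E} {f : E → ℝ}
    (hf : ConvexOn ℝ s f) {t : Finset ι} {w : ι → ℝ} {v : ι → E} {M : ℝ}
    (hw₀ : ∀ i ∈ t, 0 ≤ w i) (hw₁ : ∑ i ∈ t, w i = 1) (hmem : ∀ i ∈ t, v i ∈ s)
    (hv : ∀ i ∈ t, f (v i) ≤ M) :
    f (∑ i ∈ t, w i • v i) ≤ M :=
  calc f (∑ i ∈ t, w i • v i) ≤ ∑ i ∈ t, w i * f (v i) := hf.map_sum_le hw₀ hw₁ hmem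
    _ ≤ ∑ i ∈ t, w i * M := sum_le_sum fun i hi ↦ mul_le_mul_of_nonneg_left (hv i hi) (hw₀ i hi)
    _ = M := by rw [← sum_mul, hw₁, one_mul]

namespace ForwardEulerCondition

variable {f : E → ℝ} {N : E → E} {hFE : ℝ} {F : Type*} [FunLike F E E] [LinearMapClass F ℝ E E]

theorem exists_map_eq_smul (hN : ForwardEulerCondition f N hFE) {T : F}
    (hT : ∀ x, f (T x) ≤ f x) {a b : ℝ} (ha : 0 ≤ a) (hb : 0 ≤ b) (hba : b ≤ a * hFE) (u : E) :
    ∃ w, T (a • u + b • N u) = a • w ∧ f w ≤ f u := by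
  rcases ha.eq_or_lt with rfl | ha
  · obtain rfl : b = 0 := le_antisymm (by simpa using hba) hb
    exact ⟨u, by simp, le_rfl⟩
  refine ⟨T (u + (b / a) • N u), ?_, (hT _).trans (hN u _ (by positivity) ?_)⟩
  · rw [← map_smul, smul_add, smul_smul, mul_div_cancel₀ b ha.ne']
  · rwa [div_le_iff₀ ha, mul_comm]

theorem map_sum_le (hN : ForwardEulerCondition f N hFE) (hf : ConvexOn ℝ Set.univ f)
    {ι : Type*} {t : Finset ι} {T : ι → F} (hT : ∀ j ∈ t, ∀ x, f (T j x) ≤ f x)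
    {a b : ι → ℝ} (ha₀ : ∀ j ∈ t, 0 ≤ a j) (ha₁ : ∑ j ∈ t, a j = 1) (hb : ∀ j ∈ t, 0 ≤ b j)
    (hba : ∀ j ∈ t, b j ≤ a j * hFE) {u : ι → E} {M : ℝ} (hu : ∀ j ∈ t, f (u j) ≤ M) :
    f (∑ j ∈ t, T j (a j • u j + b j • N (u j))) ≤ M := by
  have hterm : ∀ j ∈ t, ∃ w, T j (a j • u j + b j • N (u j)) = a j • w ∧ f w ≤ M := fun j hj ↦
    (hN.exists_map_eq_smul (hT j hj) (ha₀ j hj) (hb j hj) (hba j hj) (u j)).imp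
      fun _ hw ↦ ⟨hw.1, hw.2.trans (hu j hj)⟩
  choose! w hw hfw using hterm
  rw [sum_congr rfl hw]
  exact hf.map_sum_le_of_forall_le ha₀ ha₁ (fun _ _ ↦ Set.mem_univ _) hfw

end ForwardEulerCondition

end

theorem monotoneOn_nat_Iic_of_le_succ {α : Type*} [Preorder α] {c : ℕ → α} {s : ℕ}
    (hc : ∀ n < s, c n ≤ c (n + 1)) : MonotoneOn c (Set.Iic s) := by
  intro j _ i (his : i ≤ s) hji
  induction i, hji using Nat.le_induction with
  | base => exact le_rfl
  | succ i hji ih => exact (ih (by omega)).trans (hc i (by omega))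

theorem ssp_integratingFactor_rungeKutta_general
    {E : Type*} [NormedAddCommGroup E] [NormedSpace ℝ E]
    (f : E → ℝ) (hf_conv : ConvexOn ℝ Set.univ f)
    (L : E →L[ℝ] E) (N : E → E)
    (hFE : ℝ)
    (hL : ∀ (τ : ℝ), 0 ≤ τ → ∀ u : E, f (NormedSpace.exp (τ • L) u) ≤ f u)
    (hN : ∀ u : E, ∀ τ : ℝ, 0 ≤ τ → τ ≤ hFE → f (u + τ • N u) ≤ f u)
    (s : ℕ)
    (α β : ℕ → ℕ → ℝ)
    (hα_nonneg : ∀ i j, 1 ≤ i → i ≤ s → j < i → 0 ≤ α i j)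
    (hβ_nonneg : ∀ i j, 1 ≤ i → i ≤ s → j < i → 0 ≤ β i j)
    (hα_sum : ∀ i, 1 ≤ i → i ≤ s → ∑ j ∈ Finset.range i, α i j = 1)
    (c : ℕ → ℝ) (hc_mono : ∀ j, j < s → c j ≤ c (j + 1))
    (un : E) (Δt : ℝ) (hΔt : 0 ≤ Δt)
    (hstep : ∀ i j, 1 ≤ i → i ≤ s → j < i → β i j * Δt ≤ α i j * hFE)
    (U : ℕ → E) (hU0 : U 0 = un)
    (hU : ∀ i, 1 ≤ i → i ≤ s →
      U i = ∑ j ∈ Finset.range i,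
        NormedSpace.exp (((c i - c j) * Δt) • L)
          (α i j • U j + (Δt * β i j) • N (U j))) :
    f (U s) ≤ f un := by
  suffices ∀ i ≤ s, f (U i) ≤ f un from this s le_rfl
  intro i
  induction i using Nat.strong_induction_on with
  | _ i ih =>
    intro his
    rcases Nat.eq_zero_or_pos i with rfl | hi
    · rw [hU0]
    rw [hU i hi his]
    refine ForwardEulerCondition.map_sum_le hN hf_conv (fun j hj ↦ hL _ ?_)
      (fun j hj ↦ hα_nonneg i j hi his (mem_range.mp hj)) (hα_sum i hi his)
      (fun j hj ↦ mul_nonneg hΔt (hβ_nonneg i j hi his (mem_range.mp hj)))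
      (fun j hj ↦ mul_comm Δt (β i j) ▸ hstep i j hi his (mem_range.mp hj))
      (fun j hj ↦ ih j (mem_range.mp hj) ((mem_range.mp hj).le.trans his))
    exact mul_nonneg (sub_nonneg.mpr <| monotoneOn_nat_Iic_of_le_succ hc_mono
      ((mem_range.mp hj).le.trans his) his (mem_range.mp hj).le) hΔt

/-- **SSP integrating factor Runge–Kutta methods with non-decreasing abscissas.**
If the explicit Runge–Kutta method in Shu–Osher form (coefficients `α, β ≥ 0`,
row sums of `α` equal to `1`, `β i j = 0` whenever `α i j = 0`) has non-decreasing
abscissas `0 = c 0 ≤ c 1 ≤ ⋯ ≤ c s`, `L` satisfies the exponential monotonicity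
condition, `N` satisfies the forward-Euler condition with step bound `hFE > 0`,
and `β i j * Δt ≤ α i j * hFE` for all stages, then the integrating factor
Runge–Kutta step is strongly stable: `f (U s) ≤ f uⁿ`. -/
theorem ssp_integratingFactor_rungeKutta
    {E : Type*} [NormedAddCommGroup E] [NormedSpace ℝ E] [FiniteDimensional ℝ E]
    (f : E → ℝ) (hf_cont : Continuous f) (hf_conv : ConvexOn ℝ Set.univ f)
    (L : E →L[ℝ] E) (N : E → E)
    (hFE : ℝ) (hFE_pos : 0 < hFE)
    (hL : ∀ (τ : ℝ), 0 ≤ τ → ∀ u : E, f (NormedSpace.exp (τ • L) u) ≤ f u)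
    (hN : ∀ u : E, ∀ τ : ℝ, 0 ≤ τ → τ ≤ hFE → f (u + τ • N u) ≤ f u)
    (s : ℕ) (hs : 1 ≤ s)
    (α β : ℕ → ℕ → ℝ)
    (hα_nonneg : ∀ i j, 1 ≤ i → i ≤ s → j < i → 0 ≤ α i j)
    (hβ_nonneg : ∀ i j, 1 ≤ i → i ≤ s → j < i → 0 ≤ β i j)
    (hα_sum : ∀ i, 1 ≤ i → i ≤ s → ∑ j ∈ Finset.range i, α i j = 1)
    (hβ_zero : ∀ i j, 1 ≤ i → i ≤ s → j < i → α i j = 0 → β i j = 0)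
    (c : ℕ → ℝ) (hc0 : c 0 = 0) (hc_mono : ∀ j, j < s → c j ≤ c (j + 1))
    (un : E) (Δt : ℝ) (hΔt : 0 ≤ Δt)
    (hstep : ∀ i j, 1 ≤ i → i ≤ s → j < i → β i j * Δt ≤ α i j * hFE)
    (U : ℕ → E) (hU0 : U 0 = un)
    (hU : ∀ i, 1 ≤ i → i ≤ s →
      U i = ∑ j ∈ Finset.range i,
        NormedSpace.exp (((c i - c j) * Δt) • L)
          (α i j • U j + (Δt * β i j) • N (U j))) :
    f (U s) ≤ f un :=
  ssp_integratingFactor_rungeKutta_general f hf_conv L N hFE hL hN s α β hα_nonneg hβ_nonneg hα_sum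
    c hc_mono un Δt hΔt hstep U hU0 hU
end

section
/- Let k ≥ 1 and let α_l ≥ 0, β_l ≥ 0 (l = 1, …, k) satisfy Σ_{l=1}^{k} α_l = 1 and β_l = 0 whenever α_l = 0. Suppose L satisfies the exponential monotonicity condition and N satisfies the forward-Euler condition with step bound h_FE > 0. Given previous steps u^{n−k+1}, …, u^n ∈ E and Δt ≥ 0 with β_l Δt ≤ α_l h_FE for all l (i.e. Δt ≤ C h_FE with C = min_{β_l≠0} α_l/β_l), define the explicit integrating factor multi-step update u^{n+1} = Σ_{l=1}^{k} exp((k − l + 1) Δt • L)(α_l • u^{n−k+l} + (Δt β_l) • N(u^{n−k+l})). Then f(u^{n+1}) ≤ max_{l=1,…,k} f(u^{n−k+l}). -/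
/-!
Each summand of the update is `α l • exp(τ_l L) (u l + (Δt β l / α l) • N (u l))` with
`τ_l ≥ 0`, and the step-size restriction makes `Δt β l / α l ≤ h_FE`, so by the two
monotonicity conditions `f` of the rescaled summand is at most `f (u l)`. The update is thus a
convex combination of such points, and convexity bounds `f` there by the largest of these
values.
-/

open Finset

section

variable {E : Type*} [AddCommGroup E] [Module ℝ E]

theorem exists_smul_eq_of_forwardEuler {f : E → ℝ} {N : E → E} {h : ℝ}
    (hN : ∀ u : E, ∀ τ : ℝ, 0 ≤ τ → τ ≤ h → f (u + τ • N u) ≤ f u)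
    {a b : ℝ} (ha : 0 ≤ a) (hb : 0 ≤ b) (hab : b ≤ a * h) (hb_zero : a = 0 → b = 0)
    (u : E) : ∃ p, a • u + b • N u = a • p ∧ f p ≤ f u := by
  rcases ha.eq_or_lt with rfl | ha_pos
  · exact ⟨u, by simp [hb_zero rfl], le_rfl⟩
  refine ⟨u + (b / a) • N u, ?_, hN u _ (by positivity) ?_⟩
  · rw [smul_add, smul_smul, mul_div_cancel₀ _ ha_pos.ne']
  · rwa [div_le_iff₀ ha_pos, mul_comm]

theorem exists_map_smul_eq_of_forwardEuler {F : Type*} [FunLike F E E] [LinearMapClass F ℝ E E]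
    {f : E → ℝ} {N : E → E} {h : ℝ} {T : F} (hT : ∀ x, f (T x) ≤ f x)
    (hN : ∀ u : E, ∀ τ : ℝ, 0 ≤ τ → τ ≤ h → f (u + τ • N u) ≤ f u)
    {a b : ℝ} (ha : 0 ≤ a) (hb : 0 ≤ b) (hab : b ≤ a * h) (hb_zero : a = 0 → b = 0)
    (u : E) : ∃ v, T (a • u + b • N u) = a • v ∧ f v ≤ f u := by
  obtain ⟨p, hp, hfp⟩ := exists_smul_eq_of_forwardEuler hN ha hb hab hb_zero u
  exact ⟨T p, by rw [hp, map_smul], (hT p).trans hfp⟩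

theorem ConvexOn.map_sum_le_sup' {ι : Type*} {s : Set E} {f : E → ℝ} (hf : ConvexOn ℝ s f)
    {t : Finset ι} (ht : t.Nonempty) {w : ι → ℝ} (hw₀ : ∀ i ∈ t, 0 ≤ w i)
    (hw₁ : ∑ i ∈ t, w i = 1) {p : ι → E} (hp : ∀ i ∈ t, p i ∈ s) :
    f (∑ i ∈ t, w i • p i) ≤ t.sup' ht (fun i => f (p i)) := by
  obtain ⟨i, hi, hle⟩ :=
    hf.exists_ge_of_centerMass hw₀ (hw₁ ▸ one_pos) hp
  rw [centerMass_eq_of_sum_1 _ _ hw₁] at hle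
  exact hle.trans (le_sup' (fun i => f (p i)) hi)

end

/-- **SSP integrating factor explicit linear multi-step methods.**
If the `k`-step method has coefficients `α l, β l ≥ 0` with `∑ α l = 1` and
`β l = 0` whenever `α l = 0`, `L` satisfies the exponential monotonicity
condition, `N` satisfies the forward-Euler condition with step bound `hFE > 0`,
and `β l * Δt ≤ α l * hFE` for all `l`, then the integrating factor multi-step
update `uⁿ⁺¹ = ∑ l, exp ((k - l + 1) Δt • L) (α l • u l + Δt β l • N (u l))`
satisfies `f uⁿ⁺¹ ≤ max_l f (u l)`.  Here `u l` denotes the previous step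
`u^{n-k+l}` for `l = 1, …, k`. -/
theorem ssp_integratingFactor_multiStep
    {E : Type*} [NormedAddCommGroup E] [NormedSpace ℝ E]
    (f : E → ℝ) (hf_conv : ConvexOn ℝ Set.univ f)
    (L : E →L[ℝ] E) (N : E → E)
    (hFE : ℝ)
    (hL : ∀ (τ : ℝ), 0 ≤ τ → ∀ u : E, f (NormedSpace.exp (τ • L) u) ≤ f u)
    (hN : ∀ u : E, ∀ τ : ℝ, 0 ≤ τ → τ ≤ hFE → f (u + τ • N u) ≤ f u)
    (k : ℕ) (hk : 1 ≤ k)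
    (α β : ℕ → ℝ)
    (hα_nonneg : ∀ l, 1 ≤ l → l ≤ k → 0 ≤ α l)
    (hβ_nonneg : ∀ l, 1 ≤ l → l ≤ k → 0 ≤ β l)
    (hα_sum : ∑ l ∈ Finset.Icc 1 k, α l = 1)
    (hβ_zero : ∀ l, 1 ≤ l → l ≤ k → α l = 0 → β l = 0)
    (u : ℕ → E) (Δt : ℝ) (hΔt : 0 ≤ Δt)
    (hstep : ∀ l, 1 ≤ l → l ≤ k → β l * Δt ≤ α l * hFE)
    (unext : E)
    (hunext : unext = ∑ l ∈ Finset.Icc 1 k,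
      NormedSpace.exp ((((k : ℝ) - l + 1) * Δt) • L)
        (α l • u l + (Δt * β l) • N (u l))) :
    f unext ≤ (Finset.Icc 1 k).sup' (by
      exact Finset.nonempty_Icc.mpr hk) (fun l => f (u l)) := by
  have hterm : ∀ l ∈ Icc 1 k, ∃ v, NormedSpace.exp ((((k : ℝ) - l + 1) * Δt) • L)
      (α l • u l + (Δt * β l) • N (u l)) = α l • v ∧ f v ≤ f (u l) := by
    intro l hl
    obtain ⟨hl₁, hlk⟩ := mem_Icc.mp hl
    have hτ : 0 ≤ ((k : ℝ) - l + 1) * Δt :=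
      mul_nonneg (by linarith [(Nat.cast_le (α := ℝ)).2 hlk]) hΔt
    exact exists_map_smul_eq_of_forwardEuler (hL _ hτ) hN (hα_nonneg l hl₁ hlk)
      (mul_nonneg hΔt (hβ_nonneg l hl₁ hlk)) (by linarith [hstep l hl₁ hlk])
      (fun h => by rw [hβ_zero l hl₁ hlk h, mul_zero]) (u l)
  choose! v hv hfv using hterm
  have hα₀ : ∀ l ∈ Icc 1 k, 0 ≤ α l := fun l hl =>
    hα_nonneg l (mem_Icc.mp hl).1 (mem_Icc.mp hl).2
  calc f unext = f (∑ l ∈ Icc 1 k, α l • v l) := by rw [hunext, sum_congr rfl hv]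
    _ ≤ (Icc 1 k).sup' _ (fun l => f (v l)) :=
      hf_conv.map_sum_le_sup' _ hα₀ hα_sum fun _ _ => Set.mem_univ _
    _ ≤ (Icc 1 k).sup' _ (fun l => f (u l)) := sup'_mono_fun hfv
end

section
/- Let s ≥ 1, r > 0, and for i = 2, …, s+1 let v_{i,1}, v_{i,2}, α̂_i ≥ 0 and α_{i,j} ≥ 0 (j = 1, …, i−1) satisfy the consistency condition v_{i,1} + v_{i,2} + α̂_i + Σ_{j=1}^{i−1} α_{i,j} = 1, and let abscissas satisfy 0 = c_1 ≤ c_2 ≤ ⋯ ≤ c_s ≤ c_{s+1} = 1 (non-decreasing). Suppose L satisfies the exponential monotonicity condition and N satisfies the forward-Euler condition with step bound h_FE > 0. Given u^{n−1}, u^n ∈ E and Δt with 0 ≤ Δt ≤ r h_FE, define the integrating factor two-step Runge–Kutta method: y_1 = u^n, and for i = 2, …, s+1, y_i = v_{i,1} • exp((c_i + 1) Δt • L) u^{n−1} + v_{i,2} • u^n + α̂_i • exp((c_i + 1) Δt • L)(u^{n−1} + (Δt/r) • N(u^{n−1})) + Σ_{j=1}^{i−1} α_{i,j} • exp((c_i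 − c_j) Δt • L)(y_j + (Δt/r) • N(y_j)), and u^{n+1} = y_{s+1}. Then f(u^{n+1}) ≤ max{ f(u^{n−1}), f(u^n) }. -/
/-!
Each stage `yᵢ` is a convex combination (row `i` of the nonnegative coefficients) of
`exp(τ L) uⁿ⁻¹`, `uⁿ`, `exp(τ L) (uⁿ⁻¹ + (Δt/r) N uⁿ⁻¹)` and `exp(τ L) (yⱼ + (Δt/r) N yⱼ)`
for `j < i`. Non-decreasing abscissas make every `τ` nonnegative, so exponential monotonicity and
the forward-Euler condition (step `Δt/r ≤ h_FE`) bound `f` at these points by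
`M = max (f uⁿ⁻¹) (f uⁿ)`, inductively in `i`; as the sublevel set `{f ≤ M}` is convex,
`f yᵢ ≤ M`.
-/

open Finset in
theorem Convex.smul_add_smul_add_smul_add_sum_smul_mem {𝕜 E ι : Type*} [Field 𝕜] [LinearOrder 𝕜]
    [IsStrictOrderedRing 𝕜] [AddCommGroup E] [Module 𝕜 E] {S : Set E} (hS : Convex 𝕜 S)
    {a b c : E} {z : ι → E} {wa wb wc : 𝕜} {w : ι → 𝕜} {t : Finset ι}
    (ha : a ∈ S) (hb : b ∈ S) (hc : c ∈ S) (hz : ∀ j ∈ t, z j ∈ S)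
    (hwa : 0 ≤ wa) (hwb : 0 ≤ wb) (hwc : 0 ≤ wc) (hw : ∀ j ∈ t, 0 ≤ w j)
    (hsum : wa + wb + wc + ∑ j ∈ t, w j = 1) :
    wa • a + wb • b + wc • c + ∑ j ∈ t, w j • z j ∈ S := by
  have key := hS.sum_mem (t := univ.disjSum t) (w := Sum.elim ![wa, wb, wc] w)
    (z := Sum.elim ![a, b, c] z)
    (by rintro (k | j) hk
        · fin_cases k <;> assumption
        · exact hw j (by simpa using hk))
    (by simpa [sum_disjSum, Fin.sum_univ_three] using hsum)
    (by rintro (k | j) hk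
        · fin_cases k <;> assumption
        · exact hz j (by simpa using hk))
  simpa [sum_disjSum, Fin.sum_univ_three] using key

theorem ssp_integratingFactor_twoStepRungeKutta_general
    {E : Type*} [NormedAddCommGroup E] [NormedSpace ℝ E]
    (f : E → ℝ) (hf_conv : ConvexOn ℝ Set.univ f)
    (L : E →L[ℝ] E) (N : E → E)
    (hFE : ℝ)
    (hL : ∀ (τ : ℝ), 0 ≤ τ → ∀ u : E, f (NormedSpace.exp (τ • L) u) ≤ f u)
    (hN : ∀ u : E, ∀ τ : ℝ, 0 ≤ τ → τ ≤ hFE → f (u + τ • N u) ≤ f u)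
    (s : ℕ) (r : ℝ) (hr : 0 < r)
    (v1 v2 αhat : ℕ → ℝ) (α : ℕ → ℕ → ℝ)
    (hv1 : ∀ i, 2 ≤ i → i ≤ s + 1 → 0 ≤ v1 i)
    (hv2 : ∀ i, 2 ≤ i → i ≤ s + 1 → 0 ≤ v2 i)
    (hαhat : ∀ i, 2 ≤ i → i ≤ s + 1 → 0 ≤ αhat i)
    (hα : ∀ i j, 2 ≤ i → i ≤ s + 1 → 1 ≤ j → j < i → 0 ≤ α i j)
    (hconsistency : ∀ i, 2 ≤ i → i ≤ s + 1 →
      v1 i + v2 i + αhat i + ∑ j ∈ Finset.Icc 1 (i - 1), α i j = 1)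
    (c : ℕ → ℝ) (hc1 : c 1 = 0)
    (hc_mono : ∀ j, 1 ≤ j → j ≤ s → c j ≤ c (j + 1))
    (uprev un : E) (Δt : ℝ) (hΔt_nonneg : 0 ≤ Δt) (hΔt : Δt ≤ r * hFE)
    (y : ℕ → E) (hy1 : y 1 = un)
    (hy : ∀ i, 2 ≤ i → i ≤ s + 1 →
      y i = v1 i • NormedSpace.exp (((c i + 1) * Δt) • L) uprev
          + v2 i • un
          + αhat i • NormedSpace.exp (((c i + 1) * Δt) • L)
              (uprev + (Δt / r) • N uprev)
          + ∑ j ∈ Finset.Icc 1 (i - 1), α i j •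
              NormedSpace.exp (((c i - c j) * Δt) • L)
                (y j + (Δt / r) • N (y j))) :
    f (y (s + 1)) ≤ max (f uprev) (f un) := by
  set M := max (f uprev) (f un)
  have hc : MonotoneOn c (Set.Icc 1 (s + 1)) :=
    monotoneOn_of_le_add_one Set.ordConnected_Icc fun j _ hj hj1 =>
      hc_mono j hj.1 (by simpa using hj1.2)
  have hEuler : ∀ τ : ℝ, 0 ≤ τ → ∀ u, f (NormedSpace.exp (τ • L) (u + (Δt / r) • N u)) ≤ f u :=
    fun τ hτ u => (hL τ hτ _).trans
      (hN u _ (div_nonneg hΔt_nonneg hr.le) (by rw [div_le_iff₀ hr]; linarith))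
  suffices key : ∀ i, 1 ≤ i → i ≤ s + 1 → f (y i) ≤ M from key (s + 1) (by omega) le_rfl
  intro i
  induction i using Nat.strong_induction_on with | _ i ih => ?_
  intro hi1 his
  obtain rfl | hi2 : i = 1 ∨ 2 ≤ i := by omega
  · rw [hy1]; exact le_max_right _ _
  have hτi : 0 ≤ (c i + 1) * Δt :=
    mul_nonneg (by linarith [hc ⟨le_rfl, by omega⟩ ⟨hi1, his⟩ hi1]) hΔt_nonneg
  rw [hy i hi2 his]
  refine ((hf_conv.convex_le M).smul_add_smul_add_smul_add_sum_smul_mem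
    ⟨trivial, (hL _ hτi uprev).trans (le_max_left _ _)⟩ ⟨trivial, le_max_right _ _⟩
    ⟨trivial, (hEuler _ hτi uprev).trans (le_max_left _ _)⟩ (fun j hj => ⟨trivial, ?_⟩)
    (hv1 i hi2 his) (hv2 i hi2 his) (hαhat i hi2 his)
    (fun j hj => hα i j hi2 his (Finset.mem_Icc.1 hj).1 (by grind))
    (hconsistency i hi2 his)).2
  obtain ⟨hj1, hji⟩ := Finset.mem_Icc.1 hj
  have hτj : 0 ≤ (c i - c j) * Δt :=
    mul_nonneg (sub_nonneg.2 (hc ⟨hj1, by omega⟩ ⟨hi1, his⟩ (by omega))) hΔt_nonneg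
  exact (hEuler _ hτj (y j)).trans (ih j (by omega) hj1 (by omega))

/-- **SSP integrating factor two-step Runge–Kutta methods with non-decreasing
abscissas.**  If the explicit two-step Runge–Kutta method (coefficients
`v₁ i, v₂ i, α̂ i, α i j ≥ 0` summing to one on each row, SSP coefficient `r > 0`)
has non-decreasing abscissas `0 = c 1 ≤ c 2 ≤ ⋯ ≤ c s ≤ c (s+1) = 1`,
`L` satisfies the exponential monotonicity condition, `N` satisfies the
forward-Euler condition with step bound `hFE > 0`, and `0 ≤ Δt ≤ r * hFE`,
then the integrating factor two-step Runge–Kutta update satisfies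
`f uⁿ⁺¹ ≤ max (f uⁿ⁻¹) (f uⁿ)`. -/
theorem ssp_integratingFactor_twoStepRungeKutta
    {E : Type*} [NormedAddCommGroup E] [NormedSpace ℝ E] [FiniteDimensional ℝ E]
    (f : E → ℝ) (hf_cont : Continuous f) (hf_conv : ConvexOn ℝ Set.univ f)
    (L : E →L[ℝ] E) (N : E → E)
    (hFE : ℝ) (hFE_pos : 0 < hFE)
    (hL : ∀ (τ : ℝ), 0 ≤ τ → ∀ u : E, f (NormedSpace.exp (τ • L) u) ≤ f u)
    (hN : ∀ u : E, ∀ τ : ℝ, 0 ≤ τ → τ ≤ hFE → f (u + τ • N u) ≤ f u)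
    (s : ℕ) (hs : 1 ≤ s) (r : ℝ) (hr : 0 < r)
    (v1 v2 αhat : ℕ → ℝ) (α : ℕ → ℕ → ℝ)
    (hv1 : ∀ i, 2 ≤ i → i ≤ s + 1 → 0 ≤ v1 i)
    (hv2 : ∀ i, 2 ≤ i → i ≤ s + 1 → 0 ≤ v2 i)
    (hαhat : ∀ i, 2 ≤ i → i ≤ s + 1 → 0 ≤ αhat i)
    (hα : ∀ i j, 2 ≤ i → i ≤ s + 1 → 1 ≤ j → j < i → 0 ≤ α i j)
    (hconsistency : ∀ i, 2 ≤ i → i ≤ s + 1 →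
      v1 i + v2 i + αhat i + ∑ j ∈ Finset.Icc 1 (i - 1), α i j = 1)
    (c : ℕ → ℝ) (hc1 : c 1 = 0) (hcs1 : c (s + 1) = 1)
    (hc_mono : ∀ j, 1 ≤ j → j ≤ s → c j ≤ c (j + 1))
    (uprev un : E) (Δt : ℝ) (hΔt_nonneg : 0 ≤ Δt) (hΔt : Δt ≤ r * hFE)
    (y : ℕ → E) (hy1 : y 1 = un)
    (hy : ∀ i, 2 ≤ i → i ≤ s + 1 →
      y i = v1 i • NormedSpace.exp (((c i + 1) * Δt) • L) uprev
          + v2 i • un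
          + αhat i • NormedSpace.exp (((c i + 1) * Δt) • L)
              (uprev + (Δt / r) • N uprev)
          + ∑ j ∈ Finset.Icc 1 (i - 1), α i j •
              NormedSpace.exp (((c i - c j) * Δt) • L)
                (y j + (Δt / r) • N (y j))) :
    f (y (s + 1)) ≤ max (f uprev) (f un) :=
  ssp_integratingFactor_twoStepRungeKutta_general f hf_conv L N hFE hL hN s r hr v1 v2 αhat α hv1
    hv2 hαhat hα hconsistency c hc1 hc_mono uprev un Δt hΔt_nonneg hΔt y hy1 hy
end

section
/- Under the hypotheses of the SSP integrating factor two-step Runge–Kutta theorem — v_{i,1}, v_{i,2}, α̂_i, α_{i,j} ≥ 0 with v_{i,1} + v_{i,2} + α̂_i + Σ_{j=1}^{i−1} α_{i,j} = 1 for i = 2, …, s+1, r > 0, non-decreasing abscissas 0 = c_1 ≤ c_2 ≤ ⋯ ≤ c_s ≤ c_{s+1} = 1, L satisfying the exponential monotonicity condition, N satisfying the forward-Euler condition with step bound h_FE > 0, and 0 ≤ Δt ≤ r h_FE — every stage of the method y_1 = u^n, y_i = v_{i,1} • exp((c_i + 1) Δt • L) u^{n−1} + v_{i,2} • u^n + α̂_i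 • exp((c_i + 1) Δt • L)(u^{n−1} + (Δt/r) • N(u^{n−1})) + Σ_{j=1}^{i−1} α_{i,j} • exp((c_i − c_j) Δt • L)(y_j + (Δt/r) • N(y_j)) satisfies f(y_i) ≤ max{ f(u^{n−1}), f(u^n) } for every i = 1, …, s+1. -/
/-!
Every stage is a convex combination of points of the form `exp(σ L) u` and
`exp(σ L) (u + (Δt/r) N u)` with `σ ≥ 0` and `u ∈ {uⁿ⁻¹, uⁿ, y₁, …, y_{i-1}}`: non-decreasing
abscissas make all exponents `(cᵢ - cⱼ) Δt` and `(cᵢ + 1) Δt` non-negative, and `Δt ≤ r h_FE`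
puts the Euler step `Δt / r` within the forward-Euler bound. Such points do not increase `f`,
so by strong induction on the stage they lie in the convex sublevel set `{f ≤ max (f uⁿ⁻¹) (f uⁿ)}`.
-/

theorem Convex.sum_add_sum_mem {R E ι κ : Type*} [Field R] [LinearOrder R] [IsStrictOrderedRing R]
    [AddCommGroup E] [Module R E] {S : Set E} (hS : Convex R S)
    {t : Finset ι} {u : Finset κ} {w : ι → R} {v : κ → R} {p : ι → E} {q : κ → E}
    (hw : ∀ i ∈ t, 0 ≤ w i) (hv : ∀ j ∈ u, 0 ≤ v j) (h₁ : ∑ i ∈ t, w i + ∑ j ∈ u, v j = 1)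
    (hp : ∀ i ∈ t, p i ∈ S) (hq : ∀ j ∈ u, q j ∈ S) :
    ∑ i ∈ t, w i • p i + ∑ j ∈ u, v j • q j ∈ S := by
  simpa [Finset.sum_disjSum] using
    hS.sum_mem (t := t.disjSum u) (w := Sum.elim w v) (z := Sum.elim p q)
      (by simpa using ⟨hw, hv⟩) (by simpa using h₁) (by simpa using ⟨hp, hq⟩)

theorem monotoneOn_nat_Icc_of_le_succ {α : Type*} [Preorder α] {f : ℕ → α} {a b : ℕ}
    (hf : ∀ n, a ≤ n → n < b → f n ≤ f (n + 1)) : MonotoneOn f (Set.Icc a b) :=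
  monotoneOn_of_le_succ Set.ordConnected_Icc fun n _ hn hn₁ => by
    simp only [Order.succ_eq_add_one, Set.mem_Icc] at hn hn₁
    exact hf n hn.1 (by omega)

theorem ConvexOn.map_three_add_sum_le {E ι : Type*} [AddCommGroup E] [Module ℝ E] {f : E → ℝ}
    (hf : ConvexOn ℝ Set.univ f) {a b d M : ℝ} {x y z : E} {t : Finset ι} {w : ι → ℝ}
    {p : ι → E} (ha : 0 ≤ a) (hb : 0 ≤ b) (hd : 0 ≤ d) (hw : ∀ j ∈ t, 0 ≤ w j)
    (h₁ : a + b + d + ∑ j ∈ t, w j = 1) (hx : f x ≤ M) (hy : f y ≤ M) (hz : f z ≤ M)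
    (hp : ∀ j ∈ t, f (p j) ≤ M) :
    f (a • x + b • y + d • z + ∑ j ∈ t, w j • p j) ≤ M := by
  have hmem := (hf.convex_le M).sum_add_sum_mem (t := Finset.univ) (w := ![a, b, d])
    (p := ![x, y, z]) (by simp [Fin.forall_fin_succ, ha, hb, hd]) hw
    (by simpa [Fin.sum_univ_three] using h₁)
    (fun k _ => by fin_cases k <;> simpa) (fun j hj => by simpa using hp j hj)
  simpa [Fin.sum_univ_three] using hmem.2

theorem le_of_exp_smul_forwardEuler {E : Type*} [NormedAddCommGroup E] [NormedSpace ℝ E]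
    {f : E → ℝ} {L : E →L[ℝ] E} {N : E → E} {hFE : ℝ}
    (hL : ∀ (τ : ℝ), 0 ≤ τ → ∀ u : E, f (NormedSpace.exp (τ • L) u) ≤ f u)
    (hN : ∀ u : E, ∀ τ : ℝ, 0 ≤ τ → τ ≤ hFE → f (u + τ • N u) ≤ f u)
    {σ τ : ℝ} (hσ : 0 ≤ σ) (hτ₀ : 0 ≤ τ) (hτ : τ ≤ hFE) (u : E) :
    f (NormedSpace.exp (σ • L) (u + τ • N u)) ≤ f u :=
  (hL σ hσ _).trans (hN u τ hτ₀ hτ)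

theorem ssp_integratingFactor_twoStepRungeKutta_stages_general
    {E : Type*} [NormedAddCommGroup E] [NormedSpace ℝ E]
    (f : E → ℝ) (hf_conv : ConvexOn ℝ Set.univ f)
    (L : E →L[ℝ] E) (N : E → E)
    (hFE : ℝ)
    (hL : ∀ (τ : ℝ), 0 ≤ τ → ∀ u : E, f (NormedSpace.exp (τ • L) u) ≤ f u)
    (hN : ∀ u : E, ∀ τ : ℝ, 0 ≤ τ → τ ≤ hFE → f (u + τ • N u) ≤ f u)
    (s : ℕ) (r : ℝ) (hr : 0 < r)
    (v1 v2 αhat : ℕ → ℝ) (α : ℕ → ℕ → ℝ)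
    (hv1 : ∀ i, 2 ≤ i → i ≤ s + 1 → 0 ≤ v1 i)
    (hv2 : ∀ i, 2 ≤ i → i ≤ s + 1 → 0 ≤ v2 i)
    (hαhat : ∀ i, 2 ≤ i → i ≤ s + 1 → 0 ≤ αhat i)
    (hα : ∀ i j, 2 ≤ i → i ≤ s + 1 → 1 ≤ j → j < i → 0 ≤ α i j)
    (hconsistency : ∀ i, 2 ≤ i → i ≤ s + 1 →
      v1 i + v2 i + αhat i + ∑ j ∈ Finset.Icc 1 (i - 1), α i j = 1)
    (c : ℕ → ℝ) (hc1 : c 1 = 0)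
    (hc_mono : ∀ j, 1 ≤ j → j ≤ s → c j ≤ c (j + 1))
    (uprev un : E) (Δt : ℝ) (hΔt_nonneg : 0 ≤ Δt) (hΔt : Δt ≤ r * hFE)
    (y : ℕ → E) (hy1 : y 1 = un)
    (hy : ∀ i, 2 ≤ i → i ≤ s + 1 →
      y i = v1 i • NormedSpace.exp (((c i + 1) * Δt) • L) uprev
          + v2 i • un
          + αhat i • NormedSpace.exp (((c i + 1) * Δt) • L)
              (uprev + (Δt / r) • N uprev)
          + ∑ j ∈ Finset.Icc 1 (i - 1), α i j •
              NormedSpace.exp (((c i - c j) * Δt) • L)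
                (y j + (Δt / r) • N (y j))) :
    ∀ i, 1 ≤ i → i ≤ s + 1 → f (y i) ≤ max (f uprev) (f un) := by
  have hc : MonotoneOn c (Set.Icc 1 (s + 1)) :=
    monotoneOn_nat_Icc_of_le_succ fun j hj _ => hc_mono j hj (by omega)
  have hτ₀ : 0 ≤ Δt / r := div_nonneg hΔt_nonneg hr.le
  have hτ : Δt / r ≤ hFE := (div_le_iff₀ hr).2 (by linarith)
  intro i
  induction i using Nat.strong_induction_on with
  | _ i ih =>
  intro hi₁ hi
  obtain rfl | h2 : i = 1 ∨ 2 ≤ i := by omega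
  · exact hy1 ▸ le_max_right _ _
  have hci : 0 ≤ c i := hc1 ▸ hc ⟨le_rfl, by omega⟩ ⟨hi₁, hi⟩ hi₁
  have hσ : 0 ≤ (c i + 1) * Δt := by positivity
  rw [hy i h2 hi]
  refine hf_conv.map_three_add_sum_le (hv1 i h2 hi) (hv2 i h2 hi) (hαhat i h2 hi)
    (fun j hj => hα i j h2 hi (Finset.mem_Icc.1 hj).1 (by grind)) (hconsistency i h2 hi)
    ((hL _ hσ uprev).trans (le_max_left _ _)) (le_max_right _ _)
    ((le_of_exp_smul_forwardEuler hL hN hσ hτ₀ hτ uprev).trans (le_max_left _ _)) fun j hj => ?_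
  rw [Finset.mem_Icc] at hj
  have hcj : c j ≤ c i := hc ⟨hj.1, by omega⟩ ⟨hi₁, hi⟩ (by omega)
  have hσj : 0 ≤ (c i - c j) * Δt := mul_nonneg (sub_nonneg.2 hcj) hΔt_nonneg
  exact (le_of_exp_smul_forwardEuler hL hN hσj hτ₀ hτ _).trans (ih j (by omega) hj.1 (by omega))

/-- **SSP integrating factor two-step Runge–Kutta methods with non-decreasing
abscissas.**  If the explicit two-step Runge–Kutta method (coefficients
`v₁ i, v₂ i, α̂ i, α i j ≥ 0` summing to one on each row, SSP coefficient `r > 0`)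
has non-decreasing abscissas `0 = c 1 ≤ c 2 ≤ ⋯ ≤ c s ≤ c (s+1) = 1`,
`L` satisfies the exponential monotonicity condition, `N` satisfies the
forward-Euler condition with step bound `hFE > 0`, and `0 ≤ Δt ≤ r * hFE`,
then every stage of the integrating factor two-step Runge–Kutta method satisfies
`f (y i) ≤ max (f uⁿ⁻¹) (f uⁿ)` at every stage `i = 1, …, s+1`. -/
theorem ssp_integratingFactor_twoStepRungeKutta_stages
    {E : Type*} [NormedAddCommGroup E] [NormedSpace ℝ E] [FiniteDimensional ℝ E]
    (f : E → ℝ) (hf_cont : Continuous f) (hf_conv : ConvexOn ℝ Set.univ f)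
    (L : E →L[ℝ] E) (N : E → E)
    (hFE : ℝ) (hFE_pos : 0 < hFE)
    (hL : ∀ (τ : ℝ), 0 ≤ τ → ∀ u : E, f (NormedSpace.exp (τ • L) u) ≤ f u)
    (hN : ∀ u : E, ∀ τ : ℝ, 0 ≤ τ → τ ≤ hFE → f (u + τ • N u) ≤ f u)
    (s : ℕ) (hs : 1 ≤ s) (r : ℝ) (hr : 0 < r)
    (v1 v2 αhat : ℕ → ℝ) (α : ℕ → ℕ → ℝ)
    (hv1 : ∀ i, 2 ≤ i → i ≤ s + 1 → 0 ≤ v1 i)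
    (hv2 : ∀ i, 2 ≤ i → i ≤ s + 1 → 0 ≤ v2 i)
    (hαhat : ∀ i, 2 ≤ i → i ≤ s + 1 → 0 ≤ αhat i)
    (hα : ∀ i j, 2 ≤ i → i ≤ s + 1 → 1 ≤ j → j < i → 0 ≤ α i j)
    (hconsistency : ∀ i, 2 ≤ i → i ≤ s + 1 →
      v1 i + v2 i + αhat i + ∑ j ∈ Finset.Icc 1 (i - 1), α i j = 1)
    (c : ℕ → ℝ) (hc1 : c 1 = 0) (hcs1 : c (s + 1) = 1)
    (hc_mono : ∀ j, 1 ≤ j → j ≤ s → c j ≤ c (j + 1))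
    (uprev un : E) (Δt : ℝ) (hΔt_nonneg : 0 ≤ Δt) (hΔt : Δt ≤ r * hFE)
    (y : ℕ → E) (hy1 : y 1 = un)
    (hy : ∀ i, 2 ≤ i → i ≤ s + 1 →
      y i = v1 i • NormedSpace.exp (((c i + 1) * Δt) • L) uprev
          + v2 i • un
          + αhat i • NormedSpace.exp (((c i + 1) * Δt) • L)
              (uprev + (Δt / r) • N uprev)
          + ∑ j ∈ Finset.Icc 1 (i - 1), α i j •
              NormedSpace.exp (((c i - c j) * Δt) • L)
                (y j + (Δt / r) • N (y j))) :
    ∀ i, 1 ≤ i → i ≤ s + 1 → f (y i) ≤ max (f uprev) (f un) :=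
  ssp_integratingFactor_twoStepRungeKutta_stages_general f hf_conv L N hFE hL hN s r hr v1 v2 αhat α
    hv1 hv2 hαhat hα hconsistency c hc1 hc_mono uprev un Δt hΔt_nonneg hΔt y hy1 hy
end

section
/- Let s ≥ 1 and let α_{i,j} ≥ 0, β_{i,j} ≥ 0 (1 ≤ i ≤ s, 0 ≤ j ≤ i−1) satisfy Σ_{j=0}^{i−1} α_{i,j} = 1 for each i and β_{i,j} = 0 whenever α_{i,j} = 0. Suppose F : E → E satisfies the forward-Euler condition with step bound h_FE > 0. Given u^n ∈ E and Δt ≥ 0 with β_{i,j} Δt ≤ α_{i,j} h_FE for all i, j (i.e. Δt ≤ C h_FE with C = min_{β_{i,j}≠0} α_{i,j}/β_{i,j}), define the Shu–Osher explicit Runge–Kutta stages u^{(0)} = u^n and u^{(i)} = Σ_{j=0}^{i−1} (α_{i,j} • u^{(j)} + (Δt β_{i,j}) • F(u^{(j)})) for i = 1, …, s, with u^{n+1} = u^{(s)}. Then f(u^{(i)}) ≤ f(u^n) for every i = 0, 1, …, s; in particular f(u^{n+1}) ≤ f(u^n). -/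
/-!
Each Shu–Osher stage is a convex combination, with weights `α i j`, of the forward-Euler steps
`U j + (Δt * β i j / α i j) • F (U j)`, whose step sizes are at most `hFE` by the CFL condition.
Each such step does not increase `f`, and a sublevel set of the convex function `f` is convex,
so by strong induction on the stage index every stage stays in the sublevel set `{x | f x ≤ f uⁿ}`.
-/

section ForwardEuler

variable {E : Type*} [AddCommGroup E] [Module ℝ E] {f : E → ℝ} {F : E → E} {h : ℝ}

lemma exists_smul_forwardEuler_step
    (hF : ∀ u : E, ∀ τ : ℝ, 0 ≤ τ → τ ≤ h → f (u + τ • F u) ≤ f u) (u : E) {a b : ℝ}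
    (ha : 0 ≤ a) (hb : 0 ≤ b) (hab : b ≤ a * h) (hb_zero : a = 0 → b = 0) :
    ∃ v, a • u + b • F u = a • v ∧ f v ≤ f u := by
  rcases ha.eq_or_lt with rfl | ha_pos
  · exact ⟨u, by simp [hb_zero rfl], le_rfl⟩
  · refine ⟨u + (b / a) • F u, ?_, hF u _ (div_nonneg hb ha) ((div_le_iff₀' ha_pos).2 hab)⟩
    rw [smul_add, smul_smul, mul_div_cancel₀ _ ha_pos.ne']

lemma ConvexOn.map_sum_forwardEuler_le {ι : Type*} {t : Finset ι}
    (hf : ConvexOn ℝ Set.univ f)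
    (hF : ∀ u : E, ∀ τ : ℝ, 0 ≤ τ → τ ≤ h → f (u + τ • F u) ≤ f u)
    {a b : ι → ℝ} {x : ι → E} {c : ℝ}
    (ha : ∀ j ∈ t, 0 ≤ a j) (hb : ∀ j ∈ t, 0 ≤ b j) (hab : ∀ j ∈ t, b j ≤ a j * h)
    (hb_zero : ∀ j ∈ t, a j = 0 → b j = 0) (ha_sum : ∑ j ∈ t, a j = 1)
    (hx : ∀ j ∈ t, f (x j) ≤ c) :
    f (∑ j ∈ t, (a j • x j + b j • F (x j))) ≤ c := by
  have hstep : ∀ j ∈ t, ∃ v, a j • x j + b j • F (x j) = a j • v ∧ f v ≤ f (x j) :=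
    fun j hj => exists_smul_forwardEuler_step hF (x j) (ha j hj) (hb j hj) (hab j hj)
      (hb_zero j hj)
  choose! v hv_eq hv_le using hstep
  rw [Finset.sum_congr rfl hv_eq]
  have hmem := (hf.convex_le c).sum_mem ha ha_sum
    (fun j hj => ⟨Set.mem_univ (v j), (hv_le j hj).trans (hx j hj)⟩)
  exact hmem.2

end ForwardEuler

theorem ssp_shuOsher_rungeKutta_general
    {E : Type*} [NormedAddCommGroup E] [NormedSpace ℝ E]
    (f : E → ℝ) (hf_conv : ConvexOn ℝ Set.univ f)
    (F : E → E)
    (hFE : ℝ)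
    (hF : ∀ u : E, ∀ τ : ℝ, 0 ≤ τ → τ ≤ hFE → f (u + τ • F u) ≤ f u)
    (s : ℕ)
    (α β : ℕ → ℕ → ℝ)
    (hα_nonneg : ∀ i j, 1 ≤ i → i ≤ s → j < i → 0 ≤ α i j)
    (hβ_nonneg : ∀ i j, 1 ≤ i → i ≤ s → j < i → 0 ≤ β i j)
    (hα_sum : ∀ i, 1 ≤ i → i ≤ s → ∑ j ∈ Finset.range i, α i j = 1)
    (hβ_zero : ∀ i j, 1 ≤ i → i ≤ s → j < i → α i j = 0 → β i j = 0)
    (un : E) (Δt : ℝ) (hΔt : 0 ≤ Δt)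
    (hstep : ∀ i j, 1 ≤ i → i ≤ s → j < i → β i j * Δt ≤ α i j * hFE)
    (U : ℕ → E) (hU0 : U 0 = un)
    (hU : ∀ i, 1 ≤ i → i ≤ s →
      U i = ∑ j ∈ Finset.range i, (α i j • U j + (Δt * β i j) • F (U j))) :
    (∀ i, i ≤ s → f (U i) ≤ f un) ∧ f (U s) ≤ f un := by
  have stages : ∀ i, i ≤ s → f (U i) ≤ f un := by
    intro i
    induction i using Nat.strong_induction_on with
    | _ i ih =>
      intro his
      rcases Nat.eq_zero_or_pos i with rfl | hi
      · rw [hU0]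
      have hlt : ∀ j ∈ Finset.range i, j < i := fun j hj => Finset.mem_range.1 hj
      rw [hU i hi his]
      exact hf_conv.map_sum_forwardEuler_le hF
        (fun j hj => hα_nonneg i j hi his (hlt j hj))
        (fun j hj => mul_nonneg hΔt (hβ_nonneg i j hi his (hlt j hj)))
        (fun j hj => (mul_comm Δt _).trans_le (hstep i j hi his (hlt j hj)))
        (fun j hj hα => by rw [hβ_zero i j hi his (hlt j hj) hα, mul_zero])
        (hα_sum i hi his)
        (fun j hj => ih j (hlt j hj) ((hlt j hj).le.trans his))
  exact ⟨stages, stages s le_rfl⟩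

/-- **Strong stability preservation of explicit Runge–Kutta methods in
Shu–Osher form.**  If the coefficients satisfy `α i j, β i j ≥ 0`,
`∑_{j<i} α i j = 1`, and `β i j = 0` whenever `α i j = 0`, `F` satisfies the
forward-Euler condition with step bound `hFE > 0`, and
`β i j * Δt ≤ α i j * hFE` for all stages, then every stage of the Shu–Osher
explicit Runge–Kutta method satisfies `f (U i) ≤ f uⁿ`; in particular the
update `uⁿ⁺¹ = U s` satisfies `f uⁿ⁺¹ ≤ f uⁿ`. -/
theorem ssp_shuOsher_rungeKutta
    {E : Type*} [NormedAddCommGroup E] [NormedSpace ℝ E] [FiniteDimensional ℝ E]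
    (f : E → ℝ) (hf_cont : Continuous f) (hf_conv : ConvexOn ℝ Set.univ f)
    (F : E → E)
    (hFE : ℝ) (hFE_pos : 0 < hFE)
    (hF : ∀ u : E, ∀ τ : ℝ, 0 ≤ τ → τ ≤ hFE → f (u + τ • F u) ≤ f u)
    (s : ℕ) (hs : 1 ≤ s)
    (α β : ℕ → ℕ → ℝ)
    (hα_nonneg : ∀ i j, 1 ≤ i → i ≤ s → j < i → 0 ≤ α i j)
    (hβ_nonneg : ∀ i j, 1 ≤ i → i ≤ s → j < i → 0 ≤ β i j)
    (hα_sum : ∀ i, 1 ≤ i → i ≤ s → ∑ j ∈ Finset.range i, α i j = 1)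
    (hβ_zero : ∀ i j, 1 ≤ i → i ≤ s → j < i → α i j = 0 → β i j = 0)
    (un : E) (Δt : ℝ) (hΔt : 0 ≤ Δt)
    (hstep : ∀ i j, 1 ≤ i → i ≤ s → j < i → β i j * Δt ≤ α i j * hFE)
    (U : ℕ → E) (hU0 : U 0 = un)
    (hU : ∀ i, 1 ≤ i → i ≤ s →
      U i = ∑ j ∈ Finset.range i, (α i j • U j + (Δt * β i j) • F (U j))) :
    (∀ i, i ≤ s → f (U i) ≤ f un) ∧ f (U s) ≤ f un :=
  ssp_shuOsher_rungeKutta_general f hf_conv F hFE hF s α β hα_nonneg hβ_nonneg hα_sum hβ_zero un Δt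
    hΔt hstep U hU0 hU
end

section
/- Let E be a real vector space, S an m × n real matrix, T an m × m real matrix, r ≠ 0 a real number such that I + r T is invertible, and set P = r (I + r T)⁻¹ T and R = (I − P) S. Then for any vectors x_1, …, x_n ∈ E, w_1, …, w_m ∈ E, g_1, …, g_m ∈ E and any Δt ∈ ℝ, the relations w_i = Σ_j S_{ij} • x_j + Δt • Σ_j T_{ij} • g_j (for all i = 1, …, m) hold if and only if the relations w_i = Σ_j R_{ij} • x_j + Σ_j P_{ij} • (w_j + (Δt/r) • g_j) (for all i = 1, …, m) hold. -/
section Aux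

variable {E : Type*} [AddCommGroup E] [Module ℝ E]

/-- Action of a real matrix on a vector of elements of a real vector space. -/
def spijkerAct {m n : ℕ} (A : Matrix (Fin m) (Fin n) ℝ) (v : Fin n → E) : Fin m → E :=
  fun i => ∑ j, A i j • v j

lemma spijkerAct_mul {m n p : ℕ} (A : Matrix (Fin m) (Fin n) ℝ)
    (B : Matrix (Fin n) (Fin p) ℝ) (v : Fin p → E) :
    spijkerAct (A * B) v = spijkerAct A (spijkerAct B v) := by
  funext i
  simp only [spijkerAct, Matrix.mul_apply, Finset.sum_smul, Finset.smul_sum, mul_smul]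
  rw [Finset.sum_comm]

lemma spijkerAct_one {m : ℕ} (v : Fin m → E) :
    spijkerAct (1 : Matrix (Fin m) (Fin m) ℝ) v = v := by
  funext i
  simp [spijkerAct, Matrix.one_apply]

lemma spijkerAct_matAdd {m n : ℕ} (A B : Matrix (Fin m) (Fin n) ℝ) (v : Fin n → E) :
    spijkerAct (A + B) v = spijkerAct A v + spijkerAct B v := by
  funext i
  simp [spijkerAct, add_smul, Finset.sum_add_distrib]

lemma spijkerAct_matSmul {m n : ℕ} (c : ℝ) (A : Matrix (Fin m) (Fin n) ℝ) (v : Fin n → E) :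
    spijkerAct (c • A) v = c • spijkerAct A v := by
  funext i
  simp [spijkerAct, Finset.smul_sum, mul_smul]

lemma spijkerAct_vecAdd {m n : ℕ} (A : Matrix (Fin m) (Fin n) ℝ) (u v : Fin n → E) :
    spijkerAct A (u + v) = spijkerAct A u + spijkerAct A v := by
  funext i
  simp [spijkerAct, smul_add, Finset.sum_add_distrib]

lemma spijkerAct_vecSmul {m n : ℕ} (A : Matrix (Fin m) (Fin n) ℝ) (c : ℝ) (v : Fin n → E) :
    spijkerAct A (c • v) = c • spijkerAct A v := by
  funext i
  simp [spijkerAct, Finset.smul_sum, smul_comm c]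

end Aux

/-- **Equivalence of the Spijker form and the convex-combination form.**
With `P = r (I + r T)⁻¹ T` and `R = (I − P) S` (where `r ≠ 0` and `I + r T` is
invertible), the stage relations `w i = ∑ j, S i j • x j + Δt • ∑ j, T i j • g j`
hold for all `i` if and only if the convex-combination relations
`w i = ∑ j, R i j • x j + ∑ j, P i j • (w j + (Δt / r) • g j)` hold for all `i`. -/
theorem spijker_form_iff_convexCombination_form
    {E : Type*} [AddCommGroup E] [Module ℝ E]
    {m n : ℕ}
    (S : Matrix (Fin m) (Fin n) ℝ) (T : Matrix (Fin m) (Fin m) ℝ)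
    (r : ℝ) (hr : r ≠ 0)
    (hinv : IsUnit (1 + r • T))
    (P : Matrix (Fin m) (Fin m) ℝ) (hP : P = r • ((1 + r • T)⁻¹ * T))
    (R : Matrix (Fin m) (Fin n) ℝ) (hR : R = (1 - P) * S)
    (x : Fin n → E) (w g : Fin m → E) (Δt : ℝ) :
    (∀ i, w i = (∑ j, S i j • x j) + Δt • ∑ j, T i j • g j) ↔
    (∀ i, w i = (∑ j, R i j • x j) + ∑ j, P i j • (w j + (Δt / r) • g j)) := by
  set Q : Matrix (Fin m) (Fin m) ℝ := 1 + r • T with hQ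
  have hdet : IsUnit Q.det := (Matrix.isUnit_iff_isUnit_det Q).mp hinv
  have hQ1 : Q⁻¹ * Q = 1 := Matrix.nonsing_inv_mul Q hdet
  have hQ2 : Q * Q⁻¹ = 1 := Matrix.mul_nonsing_inv Q hdet
  have hTQ : T * Q = Q * T := by
    simp [hQ, mul_add, add_mul, Matrix.mul_smul, Matrix.smul_mul]
  have hcomm : Q⁻¹ * T = T * Q⁻¹ := by
    calc Q⁻¹ * T = Q⁻¹ * T * (Q * Q⁻¹) := by rw [hQ2, mul_one]
      _ = Q⁻¹ * (T * Q) * Q⁻¹ := by simp only [mul_assoc]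
      _ = Q⁻¹ * (Q * T) * Q⁻¹ := by rw [hTQ]
      _ = (Q⁻¹ * Q) * (T * Q⁻¹) := by simp only [mul_assoc]
      _ = T * Q⁻¹ := by rw [hQ1, one_mul]
  have h1P : 1 - P = Q⁻¹ := by
    have h : Q⁻¹ * Q = Q⁻¹ + P := by
      rw [hQ, hP, mul_add, mul_one, Matrix.mul_smul]
    rw [← hQ1, h]; abel
  have hQP : Q * P = r • T := by
    rw [hP, Matrix.mul_smul, ← mul_assoc, hQ2, one_mul]
  have hPT : P * T = T * P := by
    rw [hP, Matrix.smul_mul, Matrix.mul_smul]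
    congr 1
    conv_lhs => rw [hcomm]
    rw [mul_assoc]
  have hdr : Δt / r * r = Δt := div_mul_cancel₀ Δt hr
  have hPrPT : P + r • (P * T) = r • T := by
    rw [hPT, ← hQP, hQ, add_mul, one_mul, Matrix.smul_mul]
  have hM : (Δt / r) • P + Δt • (P * T) = Δt • T := by
    have h := congrArg (fun M => (Δt / r) • M) hPrPT
    simpa [smul_add, smul_smul, hdr] using h
  have lhs_eq : (∀ i, w i = (∑ j, S i j • x j) + Δt • ∑ j, T i j • g j) ↔
      w = spijkerAct S x + Δt • spijkerAct T g := by
    rw [funext_iff]; rfl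
  have rhs_eq : (∀ i, w i = (∑ j, R i j • x j) + ∑ j, P i j • (w j + (Δt / r) • g j)) ↔
      w = spijkerAct R x + spijkerAct P (w + (Δt / r) • g) := by
    rw [funext_iff]; rfl
  rw [lhs_eq, rhs_eq]
  have hSx : spijkerAct R x + spijkerAct (P * S) x = spijkerAct S x := by
    rw [hR, ← spijkerAct_matAdd, ← Matrix.add_mul, sub_add_cancel, Matrix.one_mul]
  have hTg : (Δt / r) • spijkerAct P g + Δt • spijkerAct (P * T) g
      = Δt • spijkerAct T g := by
    rw [← spijkerAct_matSmul, ← spijkerAct_matSmul, ← spijkerAct_matAdd, hM,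
      spijkerAct_matSmul]
  constructor
  · intro hw
    rw [hw, spijkerAct_vecAdd, spijkerAct_vecAdd, spijkerAct_vecSmul, spijkerAct_vecSmul,
      ← spijkerAct_mul, ← spijkerAct_mul]
    rw [← hSx, ← hTg]
    abel
  · intro hw
    have hsplit : spijkerAct P (w + (Δt / r) • g)
        = spijkerAct P w + (Δt / r) • spijkerAct P g := by
      rw [spijkerAct_vecAdd, spijkerAct_vecSmul]
    have hw' : w = spijkerAct R x + (spijkerAct P w + (Δt / r) • spijkerAct P g) := by
      nth_rewrite 1 [hw]
      rw [hsplit]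
    have h1 : spijkerAct (1 - P) w = spijkerAct R x + (Δt / r) • spijkerAct P g := by
      have hsub : (1 : Matrix (Fin m) (Fin m) ℝ) - P + P = 1 := by abel
      have key : spijkerAct (1 - P) w + spijkerAct P w = w := by
        rw [← spijkerAct_matAdd, hsub, spijkerAct_one]
      have h3 : w - spijkerAct P w = spijkerAct R x + (Δt / r) • spijkerAct P g := by
        nth_rewrite 1 [hw']
        abel
      exact (eq_sub_of_add_eq key).trans h3
    have h2 : w = spijkerAct Q (spijkerAct (1 - P) w) := by
      rw [← spijkerAct_mul, h1P, hQ2, spijkerAct_one]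
    rw [h2, h1, spijkerAct_vecAdd, spijkerAct_vecSmul, ← spijkerAct_mul, ← spijkerAct_mul,
      hR, ← Matrix.mul_assoc, h1P, hQ2, Matrix.one_mul, hQP, spijkerAct_matSmul,
      smul_smul, hdr]
end

section
/- Let R be an m × n real matrix and P an m × m real matrix, both with non-negative entries, with P strictly lower triangular (P_{ij} = 0 for j ≥ i) and with Σ_j R_{ij} + Σ_j P_{ij} = 1 for every row i. Let r > 0 and suppose F : E → E satisfies the forward-Euler condition with step bound h_FE > 0. Let x_1, …, x_n ∈ E, let Δt satisfy 0 ≤ Δt ≤ r h_FE, and let w_1, …, w_m ∈ E satisfy the stage equations w_i = Σ_j R_{ij} • x_j + Σ_{j<i} P_{ij} • (w_j + (Δt/r) • F(w_j)) for all i. Then f(w_i) ≤ max_{1 ≤ j ≤ n} f(x_j) for every i = 1, …, m. -/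
/-!
Each stage `w i` is a convex combination of the inputs `x j` and of the forward-Euler
updates `w j + (Δt / r) • F (w j)` of earlier stages `j < i`, since `P` is strictly lower
triangular. By the maximum principle for convex functions, `f (w i)` is at most the value of
`f` at one of these points; the forward-Euler condition with step `Δt / r ≤ hFE` bounds the
value at an update by `f (w j)`, so strong induction on the stage index gives the bound.
-/

open Finset

theorem ConvexOn.map_sum_le_of_forall_le_s10 {𝕜 E β ι : Type*} [Field 𝕜] [LinearOrder 𝕜]
    [IsStrictOrderedRing 𝕜] [AddCommGroup E] [AddCommGroup β] [LinearOrder β]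
    [IsOrderedAddMonoid β] [Module 𝕜 E] [Module 𝕜 β] [IsStrictOrderedModule 𝕜 β]
    {s : Set E} {f : E → β} (hf : ConvexOn 𝕜 s f) {t : Finset ι} {c : ι → 𝕜} {p : ι → E}
    {M : β} (hc₀ : ∀ k ∈ t, 0 ≤ c k) (hc₁ : ∑ k ∈ t, c k = 1) (hp : ∀ k ∈ t, p k ∈ s)
    (hM : ∀ k ∈ t, f (p k) ≤ M) : f (∑ k ∈ t, c k • p k) ≤ M := by
  obtain ⟨k, hk, hle⟩ := hf.exists_ge_of_centerMass hc₀ (hc₁ ▸ zero_lt_one) hp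
  rw [t.centerMass_eq_of_sum_1 p hc₁] at hle
  exact hle.trans (hM k hk)

theorem stage_le_of_convexCombination_form {E ι κ : Type*} [AddCommGroup E] [Module ℝ E]
    [LinearOrder ι] [Fintype ι] [Fintype κ] {f : E → ℝ} (hf : ConvexOn ℝ Set.univ f)
    {G : E → E} (hG : ∀ u, f (G u) ≤ f u) {R : Matrix ι κ ℝ} {P : Matrix ι ι ℝ}
    (hR : ∀ i j, 0 ≤ R i j) (hP : ∀ i j, 0 ≤ P i j) (hP_lower : ∀ i j, i ≤ j → P i j = 0)
    (hrowsum : ∀ i, ∑ j, R i j + ∑ j, P i j = 1) {x : κ → E} {w : ι → E} {M : ℝ}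
    (hx : ∀ j, f (x j) ≤ M)
    (hw : ∀ i, w i = ∑ j, R i j • x j + ∑ j ∈ univ.filter (· < i), P i j • G (w j))
    (i : ι) : f (w i) ≤ M := by
  induction i using WellFoundedLT.induction with
  | ind i ih =>
  set t : Finset (κ ⊕ ι) := univ.disjSum (univ.filter (· < i))
  have hw_sum : w i = ∑ k ∈ t, Sum.elim (R i) (P i) k • Sum.elim x (G ∘ w) k := by
    rw [hw i, sum_disjSum]
    rfl
  have hrowsum_lt : ∑ k ∈ t, Sum.elim (R i) (P i) k = 1 := by
    rw [sum_disjSum, ← hrowsum i, sum_filter_of_ne fun j _ hj => ?_]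
    · rfl
    · exact lt_of_not_ge fun hij => hj (hP_lower i j hij)
  rw [hw_sum]
  refine hf.map_sum_le_of_forall_le_s10 ?_ hrowsum_lt (fun _ _ => trivial) ?_
  · rintro (j | j) -
    exacts [hR i j, hP i j]
  · rintro (j | j) hk
    · exact hx j
    · have hji : j < i := by simpa [t] using hk
      exact (hG (w j)).trans (ih j hji)

theorem ssp_convexCombination_form_general
    {E : Type*} [NormedAddCommGroup E] [NormedSpace ℝ E]
    (f : E → ℝ) (hf_conv : ConvexOn ℝ Set.univ f)
    (F : E → E)
    (hFE : ℝ)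
    (hF : ∀ u : E, ∀ τ : ℝ, 0 ≤ τ → τ ≤ hFE → f (u + τ • F u) ≤ f u)
    {m n : ℕ} (hn : 0 < n)
    (R : Matrix (Fin m) (Fin n) ℝ) (P : Matrix (Fin m) (Fin m) ℝ)
    (hR_nonneg : ∀ i j, 0 ≤ R i j) (hP_nonneg : ∀ i j, 0 ≤ P i j)
    (hP_lower : ∀ i j, i ≤ j → P i j = 0)
    (hrowsum : ∀ i, (∑ j, R i j) + (∑ j, P i j) = 1)
    (r : ℝ) (hr : 0 < r)
    (x : Fin n → E) (Δt : ℝ) (hΔt_nonneg : 0 ≤ Δt) (hΔt : Δt ≤ r * hFE)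
    (w : Fin m → E)
    (hw : ∀ i, w i = (∑ j, R i j • x j) +
      ∑ j ∈ Finset.univ.filter (fun j => j < i),
        P i j • (w j + (Δt / r) • F (w j))) :
    ∀ i, f (w i) ≤ Finset.univ.sup'
      (have : Nonempty (Fin n) := Fin.pos_iff_nonempty.mp hn; Finset.univ_nonempty)
      (fun j => f (x j)) := by
  have hEuler : ∀ u, f (u + (Δt / r) • F u) ≤ f u := fun u =>
    hF u _ (div_nonneg hΔt_nonneg hr.le) ((div_le_iff₀ hr).2 (by linarith))
  exact stage_le_of_convexCombination_form hf_conv hEuler hR_nonneg hP_nonneg hP_lower hrowsum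
    (fun j => le_sup' (fun j => f (x j)) (mem_univ j)) hw

/-- **Strong stability of methods in convex-combination form.**
If `R` and `P` are entrywise non-negative, `P` is strictly lower triangular,
each row of `[R P]` sums to one, `F` satisfies the forward-Euler condition with
step bound `hFE > 0`, `r > 0`, and `0 ≤ Δt ≤ r * hFE`, then every stage `w i`
of the convex-combination form satisfies `f (w i) ≤ max_j f (x j)`. -/
theorem ssp_convexCombination_form
    {E : Type*} [NormedAddCommGroup E] [NormedSpace ℝ E] [FiniteDimensional ℝ E]
    (f : E → ℝ) (hf_cont : Continuous f) (hf_conv : ConvexOn ℝ Set.univ f)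
    (F : E → E)
    (hFE : ℝ) (hFE_pos : 0 < hFE)
    (hF : ∀ u : E, ∀ τ : ℝ, 0 ≤ τ → τ ≤ hFE → f (u + τ • F u) ≤ f u)
    {m n : ℕ} (hn : 0 < n)
    (R : Matrix (Fin m) (Fin n) ℝ) (P : Matrix (Fin m) (Fin m) ℝ)
    (hR_nonneg : ∀ i j, 0 ≤ R i j) (hP_nonneg : ∀ i j, 0 ≤ P i j)
    (hP_lower : ∀ i j, i ≤ j → P i j = 0)
    (hrowsum : ∀ i, (∑ j, R i j) + (∑ j, P i j) = 1)
    (r : ℝ) (hr : 0 < r)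
    (x : Fin n → E) (Δt : ℝ) (hΔt_nonneg : 0 ≤ Δt) (hΔt : Δt ≤ r * hFE)
    (w : Fin m → E)
    (hw : ∀ i, w i = (∑ j, R i j • x j) +
      ∑ j ∈ Finset.univ.filter (fun j => j < i),
        P i j • (w j + (Δt / r) • F (w j))) :
    ∀ i, f (w i) ≤ Finset.univ.sup'
      (have : Nonempty (Fin n) := Fin.pos_iff_nonempty.mp hn; Finset.univ_nonempty)
      (fun j => f (x j)) :=
  ssp_convexCombination_form_general f hf_conv F hFE hF hn R P hR_nonneg hP_nonneg hP_lower hrowsum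
    r hr x Δt hΔt_nonneg hΔt w hw
end

section
/- Suppose L satisfies the exponential monotonicity condition and N satisfies the forward-Euler condition with step bound h_FE > 0. Given u^n ∈ E and Δt with 0 ≤ Δt ≤ (3/4) h_FE, define u^{(1)} = (1/2) • exp((2/3) Δt • L) u^n + (1/2) • exp((2/3) Δt • L)(u^n + (4/3) Δt • N(u^n)), u^{(2)} = (2/3) • exp((2/3) Δt • L) u^n + (1/3) • (u^{(1)} + (4/3) Δt • N(u^{(1)})), and u^{n+1} = (59/128) • exp(Δt • L) u^n + (15/128) • exp(Δt • L)(u^n + (4/3) Δt • N(u^n)) + (27/64) • exp((1/3) Δt • L)(u^{(2)} + (4/3) Δt • N(u^{(2)})). Then f(u^{n+1}) ≤ f(u^n). -/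
/-!
Each stage of the method is a convex combination of vectors of the form `exp (τ • L) v` or
`exp (τ • L) (v + (4/3) Δt • N v)` with `τ ≥ 0` and `f v ≤ f uⁿ` (for `v = uⁿ` or an earlier
stage). Since `(4/3) Δt ≤ h_FE`, both kinds have `f`-value at most `f uⁿ`, and convexity of `f`
carries this bound through the convex combinations, stage by stage.
-/

section ConvexCombination

variable {E : Type*} [AddCommGroup E] [Module ℝ E] {s : Set E} {f : E → ℝ}

theorem ConvexOn.map_combo_le_of_le (hf : ConvexOn ℝ s f) {x y : E} (hx : x ∈ s) (hy : y ∈ s)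
    {a b M : ℝ} (ha : 0 ≤ a) (hb : 0 ≤ b) (hab : a + b = 1) (hfx : f x ≤ M) (hfy : f y ≤ M) :
    f (a • x + b • y) ≤ M :=
  (hf.le_on_segment' hx hy ha hb hab).trans (max_le hfx hfy)

theorem ConvexOn.map_combo₃_le_of_le (hf : ConvexOn ℝ s f) {x y z : E} (hx : x ∈ s) (hy : y ∈ s)
    (hz : z ∈ s) {a b c M : ℝ} (ha : 0 ≤ a) (hb : 0 ≤ b) (hc : 0 ≤ c) (habc : a + b + c = 1)
    (hfx : f x ≤ M) (hfy : f y ≤ M) (hfz : f z ≤ M) :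
    f (a • x + b • y + c • z) ≤ M := by
  have jensen := hf.map_sum_le (t := Finset.univ) (w := ![a, b, c]) (p := ![x, y, z])
    (by simp [Fin.forall_fin_succ, *]) (by simp [Fin.sum_univ_three, habc])
    (by simp [Fin.forall_fin_succ, *])
  simp only [Fin.sum_univ_three, Matrix.cons_val_zero, Matrix.cons_val_one, Matrix.cons_val_two,
    Matrix.head_cons, Matrix.tail_cons, smul_eq_mul] at jensen
  calc f (a • x + b • y + c • z) ≤ a * f x + b * f y + c * f z := jensen
    _ ≤ a * M + b * M + c * M := by gcongr
    _ = M := by linear_combination M * habc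

end ConvexCombination

theorem ssp_integratingFactor_eSSPRKplus33_general
    {E : Type*} [NormedAddCommGroup E] [NormedSpace ℝ E]
    (f : E → ℝ) (hf_conv : ConvexOn ℝ Set.univ f)
    (L : E →L[ℝ] E) (N : E → E)
    (hFE : ℝ)
    (hL : ∀ (τ : ℝ), 0 ≤ τ → ∀ u : E, f (NormedSpace.exp (τ • L) u) ≤ f u)
    (hN : ∀ u : E, ∀ τ : ℝ, 0 ≤ τ → τ ≤ hFE → f (u + τ • N u) ≤ f u)
    (un : E) (Δt : ℝ) (hΔt_nonneg : 0 ≤ Δt) (hΔt : Δt ≤ (3 / 4) * hFE)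
    (u1 u2 unext : E)
    (hu1 : u1 = (1 / 2 : ℝ) • NormedSpace.exp (((2 / 3 : ℝ) * Δt) • L) un
              + (1 / 2 : ℝ) • NormedSpace.exp (((2 / 3 : ℝ) * Δt) • L)
                  (un + ((4 / 3 : ℝ) * Δt) • N un))
    (hu2 : u2 = (2 / 3 : ℝ) • NormedSpace.exp (((2 / 3 : ℝ) * Δt) • L) un
              + (1 / 3 : ℝ) • (u1 + ((4 / 3 : ℝ) * Δt) • N u1))
    (hunext : unext = (59 / 128 : ℝ) • NormedSpace.exp (Δt • L) un
              + (15 / 128 : ℝ) • NormedSpace.exp (Δt • L)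
                  (un + ((4 / 3 : ℝ) * Δt) • N un)
              + (27 / 64 : ℝ) • NormedSpace.exp (((1 / 3 : ℝ) * Δt) • L)
                  (u2 + ((4 / 3 : ℝ) * Δt) • N u2)) :
    f unext ≤ f un := by
  have euler : ∀ u : E, f (u + ((4 / 3 : ℝ) * Δt) • N u) ≤ f u :=
    fun u => hN u _ (by positivity) (by linarith)
  have h23 : 0 ≤ (2 / 3 : ℝ) * Δt := by positivity
  have h13 : 0 ≤ (1 / 3 : ℝ) * Δt := by positivity
  have hfu1 : f u1 ≤ f un := by
    rw [hu1]
    exact hf_conv.map_combo_le_of_le trivial trivial (by norm_num) (by norm_num) (by norm_num)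
      (hL _ h23 un) ((hL _ h23 _).trans (euler un))
  have hfu2 : f u2 ≤ f un := by
    rw [hu2]
    exact hf_conv.map_combo_le_of_le trivial trivial (by norm_num) (by norm_num) (by norm_num)
      (hL _ h23 un) ((euler u1).trans hfu1)
  rw [hunext]
  exact hf_conv.map_combo₃_le_of_le trivial trivial trivial (by norm_num) (by norm_num)
    (by norm_num) (by norm_num) (hL _ hΔt_nonneg un) ((hL _ hΔt_nonneg _).trans (euler un))
    ((hL _ h13 _).trans ((euler u2).trans hfu2))

/-- **Strong stability of the third-order SSP integrating factor Runge–Kutta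
method based on eSSPRK⁺(3,3) (SSP coefficient 3/4).**
If `L` satisfies the exponential monotonicity condition, `N` satisfies the
forward-Euler condition with step bound `hFE > 0`, and `0 ≤ Δt ≤ (3/4) hFE`,
then the update of the method satisfies `f uⁿ⁺¹ ≤ f uⁿ`. -/
theorem ssp_integratingFactor_eSSPRKplus33
    {E : Type*} [NormedAddCommGroup E] [NormedSpace ℝ E] [FiniteDimensional ℝ E]
    (f : E → ℝ) (hf_cont : Continuous f) (hf_conv : ConvexOn ℝ Set.univ f)
    (L : E →L[ℝ] E) (N : E → E)
    (hFE : ℝ) (hFE_pos : 0 < hFE)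
    (hL : ∀ (τ : ℝ), 0 ≤ τ → ∀ u : E, f (NormedSpace.exp (τ • L) u) ≤ f u)
    (hN : ∀ u : E, ∀ τ : ℝ, 0 ≤ τ → τ ≤ hFE → f (u + τ • N u) ≤ f u)
    (un : E) (Δt : ℝ) (hΔt_nonneg : 0 ≤ Δt) (hΔt : Δt ≤ (3 / 4) * hFE)
    (u1 u2 unext : E)
    (hu1 : u1 = (1 / 2 : ℝ) • NormedSpace.exp (((2 / 3 : ℝ) * Δt) • L) un
              + (1 / 2 : ℝ) • NormedSpace.exp (((2 / 3 : ℝ) * Δt) • L)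
                  (un + ((4 / 3 : ℝ) * Δt) • N un))
    (hu2 : u2 = (2 / 3 : ℝ) • NormedSpace.exp (((2 / 3 : ℝ) * Δt) • L) un
              + (1 / 3 : ℝ) • (u1 + ((4 / 3 : ℝ) * Δt) • N u1))
    (hunext : unext = (59 / 128 : ℝ) • NormedSpace.exp (Δt • L) un
              + (15 / 128 : ℝ) • NormedSpace.exp (Δt • L)
                  (un + ((4 / 3 : ℝ) * Δt) • N un)
              + (27 / 64 : ℝ) • NormedSpace.exp (((1 / 3 : ℝ) * Δt) • L)
                  (u2 + ((4 / 3 : ℝ) * Δt) • N u2)) :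
    f unext ≤ f un :=
  ssp_integratingFactor_eSSPRKplus33_general f hf_conv L N hFE hL hN un Δt hΔt_nonneg hΔt u1 u2
    unext hu1 hu2 hunext
end

section
/- Let n ≥ 1, let u : ZMod n → ℝ be a periodic grid function, and let λ be a real number with 0 ≤ λ ≤ 1. Define the first-order upwind forward-Euler step v : ZMod n → ℝ by v(i) = u(i) − λ (u(i) − u(i−1)). Then the total variation does not increase: Σ_{i ∈ ZMod n} |v(i+1) − v(i)| ≤ Σ_{i ∈ ZMod n} |u(i+1) − u(i)|. -/
/-- **The first-order upwind scheme with forward Euler is total variation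
diminishing for `0 ≤ λ ≤ 1`.**  For a periodic grid function
`u : ZMod n → ℝ`, the update `v i = u i − λ (u i − u (i−1))` satisfies
`∑ i, |v (i+1) − v i| ≤ ∑ i, |u (i+1) − u i|`. -/
theorem tvd_upwind_forwardEuler
    (n : ℕ) [NeZero n] (hn : 1 ≤ n)
    (u : ZMod n → ℝ) (lam : ℝ) (hlam0 : 0 ≤ lam) (hlam1 : lam ≤ 1)
    (v : ZMod n → ℝ) (hv : ∀ i, v i = u i - lam * (u i - u (i - 1))) :
    ∑ i : ZMod n, |v (i + 1) - v i| ≤ ∑ i : ZMod n, |u (i + 1) - u i| := by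
  have key : ∀ i : ZMod n,
      |v (i + 1) - v i| ≤ (1 - lam) * |u (i + 1) - u i| + lam * |u i - u (i - 1)| := by
    intro i
    have h1 : v (i + 1) - v i
        = (1 - lam) * (u (i + 1) - u i) + lam * (u i - u (i - 1)) := by
      rw [hv, hv]
      have : i + 1 - 1 = i := by ring
      rw [this]; ring
    rw [h1]
    calc |(1 - lam) * (u (i + 1) - u i) + lam * (u i - u (i - 1))|
        ≤ |(1 - lam) * (u (i + 1) - u i)| + |lam * (u i - u (i - 1))| := abs_add_le _ _
      _ = (1 - lam) * |u (i + 1) - u i| + lam * |u i - u (i - 1)| := by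
          rw [abs_mul, abs_mul, abs_of_nonneg (by linarith), abs_of_nonneg hlam0]
  calc ∑ i : ZMod n, |v (i + 1) - v i|
      ≤ ∑ i : ZMod n, ((1 - lam) * |u (i + 1) - u i| + lam * |u i - u (i - 1)|) :=
        Finset.sum_le_sum fun i _ => key i
    _ = (1 - lam) * ∑ i : ZMod n, |u (i + 1) - u i|
        + lam * ∑ i : ZMod n, |u i - u (i - 1)| := by
        rw [Finset.sum_add_distrib, Finset.mul_sum, Finset.mul_sum]
    _ = ∑ i : ZMod n, |u (i + 1) - u i| := by
        have : ∑ i : ZMod n, |u i - u (i - 1)| = ∑ i : ZMod n, |u (i + 1) - u i| := by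
          refine Fintype.sum_equiv (Equiv.subRight (1 : ZMod n)) _ _ fun i => ?_
          simp [Equiv.subRight, sub_add_cancel]
        rw [this]; ring
end
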